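/- Let n be odd. Then the image of the map x ↦ x^3 + x on F_{2^n} equals {0} ∪ {ξ ≠ 0 : Tr(ξ^{-1}) = 0} ∪ {s + s^{-1} : s ∈ F_{2^{2n}}, s^{(2^n+1)/3} = 1, s ≠ 1}, where the three sets are pairwise disjoint. -/

import Mathlib

/-!
Write `x = u + u⁻¹` with `u ∈ E` (possible because `u ^ 2 + x u + 1` splits over `E`); then
`x ^ 3 + x = u ^ 3 + u⁻³` in characteristic two. Since `u ^ 2 ^ n + u ^ (-2 ^ n) = u + u⁻¹`,
Frobenius either fixes `u` or inverts it. If `u ∈ F`, then `ξ = W + W⁻¹` with `W = u ^ 3 ∈ F`,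
and `ξ⁻¹ = z ^ 2 + z` with `z = (W + 1)⁻¹ ∈ F`, so `Tr ξ⁻¹ = z ^ 2 ^ n + z = 0`.
If `u ^ (2 ^ n + 1) = 1`, then `s = u ^ 3` satisfies `s ^ ((2 ^ n + 1) / 3) = 1`.
Conversely, cube roots exist in `Fˣ` because `3 ∤ 2 ^ n - 1`, and in the cyclic group of order
`2 ^ n + 1` because `3 ∣ 2 ^ n + 1`. The same computation with `z = (s + 1)⁻¹ ∉ F` gives
`Tr (s + s⁻¹)⁻¹ = z ^ 2 ^ n + z = 1`, which separates the last two sets.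
-/

open Polynomial

theorem eq_or_eq_inv_of_add_inv_eq_add_inv {K : Type*} [Field K] {u v : K} (hu : u ≠ 0)
    (hv : v ≠ 0) (h : v + v⁻¹ = u + u⁻¹) : v = u ∨ v = u⁻¹ := by
  have : (v - u) * (v - u⁻¹) = 0 := by
    linear_combination v * h - mul_inv_cancel₀ hv + mul_inv_cancel₀ hu
  rcases mul_eq_zero.1 this with h | h
  · exact .inl (sub_eq_zero.1 h)
  · exact .inr (sub_eq_zero.1 h)

section CharTwo

variable {K : Type*} [Field K] [CharP K 2]

theorem add_inv_pow_three_add_add_inv (u : K) :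
    (u + u⁻¹) ^ 3 + (u + u⁻¹) = u ^ 3 + (u ^ 3)⁻¹ := by
  rcases eq_or_ne u 0 with rfl | hu
  · simp
  · rw [← inv_pow]
    linear_combination (3 * (u + u⁻¹)) * mul_inv_cancel₀ hu +
      (2 * (u + u⁻¹)) * CharTwo.two_eq_zero (R := K)

theorem inv_add_inv_eq_sq_add_self (W : K) :
    (W + W⁻¹)⁻¹ = (W + 1)⁻¹ ^ 2 + (W + 1)⁻¹ := by
  rcases eq_or_ne W 0 with rfl | hW
  · simp [CharTwo.add_self_eq_zero]
  rcases eq_or_ne (W + 1) 0 with hW1 | hW1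
  · have : W = 1 := by linear_combination hW1 - CharTwo.two_eq_zero (R := K)
    simp [this, CharTwo.add_self_eq_zero]
  · have hsq : W + W⁻¹ = (W + 1) ^ 2 * W⁻¹ := by
      field_simp
      linear_combination -W * CharTwo.two_eq_zero (R := K)
    rw [hsq, mul_inv, inv_inv]
    field_simp
    linear_combination -CharTwo.two_eq_zero (R := K)

theorem add_inv_eq_of_sq_add_self_eq_inv {ξ z : K} (h : z ^ 2 + z = ξ⁻¹) :
    (z⁻¹ + 1) + (z⁻¹ + 1)⁻¹ = ξ := by
  have hz : (z⁻¹ + 1 + 1)⁻¹ = z := by rw [add_assoc, CharTwo.add_self_eq_zero, add_zero, inv_inv]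
  rw [← inv_inj, inv_add_inv_eq_sq_add_self, hz, h]

theorem eq_or_eq_add_one_of_sq_add_self_eq {y z : K} (h : y ^ 2 + y = z ^ 2 + z) :
    y = z ∨ y = z + 1 := by
  have : (y + z) * (y + z + 1) = 0 := by
    linear_combination h + (y * z + z ^ 2 + z) * CharTwo.two_eq_zero (R := K)
  rcases mul_eq_zero.1 this with h | h
  · left; linear_combination h - z * CharTwo.two_eq_zero (R := K)
  · right; linear_combination h - (z + 1) * CharTwo.two_eq_zero (R := K)

theorem sum_range_sq_add_self_pow_two_pow (m : ℕ) (z : K) :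
    ∑ i ∈ Finset.range m, (z ^ 2 + z) ^ 2 ^ i = z ^ 2 ^ m + z := by
  induction m with
  | zero => simp [CharTwo.add_self_eq_zero]
  | succ m ih =>
    rw [Finset.sum_range_succ, ih, add_pow_char_pow, ← pow_mul, ← pow_succ']
    linear_combination z ^ 2 ^ m * CharTwo.two_eq_zero (R := K)

theorem sum_range_two_mul_pow_two_pow_eq_zero {n : ℕ} {a : K} (ha : a ^ 2 ^ n = a) :
    ∑ i ∈ Finset.range (2 * n), a ^ 2 ^ i = 0 := by
  have hper (i : ℕ) : a ^ 2 ^ (n + i) = a ^ 2 ^ i := by rw [pow_add, pow_mul, ha]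
  simp only [two_mul, Finset.sum_range_add, hper, CharTwo.add_self_eq_zero]

theorem sum_range_inv_add_inv_pow_two_pow_eq_one {n : ℕ} {s : K} (hs0 : s ≠ 0) (hs1 : s ≠ 1)
    (hs : s ^ 2 ^ n = s⁻¹) : ∑ i ∈ Finset.range n, (s + s⁻¹)⁻¹ ^ 2 ^ i = 1 := by
  have hs1' : s + 1 ≠ 0 := fun h => hs1 (by linear_combination h - CharTwo.two_eq_zero (R := K))
  rw [inv_add_inv_eq_sq_add_self, sum_range_sq_add_self_pow_two_pow, inv_pow, add_pow_char_pow,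
    one_pow, hs]
  have : 1 + s ≠ 0 := by rwa [add_comm]
  field_simp
  ring

theorem add_inv_ne_zero {s : K} (hs0 : s ≠ 0) (hs1 : s ≠ 1) :
    s + s⁻¹ ≠ 0 := by
  intro h
  rcases eq_or_eq_inv_of_add_inv_eq_add_inv one_ne_zero hs0
    (by rw [h, inv_one, CharTwo.add_self_eq_zero]) with h | h
  exacts [hs1 h, hs1 (h.trans inv_one)]

end CharTwo

theorem FiniteField.exists_sq_add_self_eq {K : Type*} [Field K] [Fintype K] {m : ℕ}
    (hK : Fintype.card K = 2 ^ m) {a : K} (ha : ∑ i ∈ Finset.range m, a ^ 2 ^ i = 0) :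
    ∃ y, y ^ 2 + y = a := by
  classical
  have := charP_of_card_eq_prime_pow (p := 2) hK
  have hm : m ≠ 0 := by
    rintro rfl
    simpa [hK] using Fintype.one_lt_card (α := K)
  -- The fibres of `y ↦ y ^ 2 + y` have at most two points, so its image `S` has at least
  -- `2 ^ (m - 1)` elements, all roots of `T`; as `deg T ≤ 2 ^ (m - 1)`, `T` has no other root.
  set T : K[X] := ∑ i ∈ Finset.range m, X ^ 2 ^ i
  have hT0 : T ≠ 0 := by
    intro h
    have := congrArg (coeff · 1) h
    simp [T, coeff_X_pow, @eq_comm _ 1 (2 ^ _), hm] at this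
  have hTdeg : T.natDegree ≤ 2 ^ (m - 1) :=
    natDegree_sum_le_of_forall_le _ _ fun i hi =>
      (natDegree_X_pow_le _).trans (Nat.pow_le_pow_right two_pos (by simp at hi; omega))
  have hTeval (b : K) : T.eval b = ∑ i ∈ Finset.range m, b ^ 2 ^ i := by simp [T, eval_finsetSum]
  set S := Finset.univ.image fun y : K => y ^ 2 + y
  have hS : 2 ^ m ≤ 2 * S.card := by
    rw [← hK, ← Finset.card_univ]
    refine Finset.card_le_mul_card_image _ 2 fun b hb => ?_
    obtain ⟨y, -, rfl⟩ := Finset.mem_image.1 hb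
    refine (Finset.card_le_card fun z hz => ?_).trans (Finset.card_le_two (a := y) (b := y + 1))
    simpa using eq_or_eq_add_one_of_sq_add_self_eq (Finset.mem_filter.1 hz).2
  by_contra hne
  have haS : a ∉ S := by simpa [S] using hne
  have hroots : (insert a S).val ⊆ T.roots := fun b hb => by
    rw [mem_roots hT0, IsRoot, hTeval]
    obtain rfl | hb := Finset.mem_insert.1 hb
    · exact ha
    · obtain ⟨y, -, rfl⟩ := Finset.mem_image.1 hb
      rw [sum_range_sq_add_self_pow_two_pow, ← hK, FiniteField.pow_card, CharTwo.add_self_eq_zero]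
  have := (card_le_degree_of_subset_roots hroots).trans hTdeg
  rw [Finset.card_insert_of_notMem haS] at this
  have : 2 ^ m = 2 * 2 ^ (m - 1) := by rw [← pow_succ']; congr 1; omega
  omega

theorem FiniteField.exists_pow_eq_of_coprime {K : Type*} [Field K] [Fintype K] {k : ℕ}
    (hk : (Fintype.card K - 1).Coprime k) {a : K} (ha : a ≠ 0) : ∃ w : K, w ^ k = a := by
  rw [← Nat.card_eq_fintype_card, ← Nat.card_units] at hk
  exact ⟨((powCoprime hk).symm (Units.mk0 a ha) : K),
    congrArg Units.val ((powCoprime hk).apply_symm_apply _)⟩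

theorem IsCyclic.exists_pow_eq_of_pow_eq_one {G : Type*} [Group G] [Finite G] [IsCyclic G]
    {m k : ℕ} (hmk : m * k ∣ Nat.card G) {s : G} (hs : s ^ k = 1) :
    ∃ u : G, u ^ (m * k) = 1 ∧ u ^ m = s := by
  obtain ⟨g, hg⟩ := IsCyclic.exists_monoid_generator (α := G)
  have hord : orderOf g = Nat.card G := orderOf_eq_card_of_forall_mem_powers hg
  obtain ⟨r, hr⟩ := hmk
  obtain ⟨j, rfl⟩ := (Submonoid.mem_powers_iff _ _).1 (hg s)
  have hk : k ≠ 0 := by rintro rfl; exact Nat.card_pos.ne' (by simpa using hr)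
  have hjk : m * r * k ∣ j * k := by
    rw [show m * r * k = m * k * r by ring, ← hr, ← hord]
    exact orderOf_dvd_of_pow_eq_one (by rwa [pow_mul])
  obtain ⟨t, rfl⟩ := Nat.dvd_of_mul_dvd_mul_right (Nat.pos_of_ne_zero hk) hjk
  refine ⟨g ^ (r * t), ?_, by rw [← pow_mul]; congr 1; ring⟩
  rw [← pow_mul, ← orderOf_dvd_iff_pow_eq_one, hord, hr]
  exact ⟨t, by ring⟩

theorem exists_algebraMap_eq_of_pow_card_eq {F E : Type*} [Field F] [Fintype F] [Field E]
    [Algebra F E] {z : E} (hz : z ^ Fintype.card F = z) : ∃ x : F, algebraMap F E x = z := by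
  have hq := Fintype.one_lt_card (α := F)
  have hroots : (map (algebraMap F E) (X ^ Fintype.card F - X)).roots =
      Finset.univ.val.map (algebraMap F E) := by
    rw [← roots_map_of_injective_of_card_eq_natDegree (algebraMap F E).injective,
      FiniteField.roots_X_pow_card_sub_X]
    rw [FiniteField.roots_X_pow_card_sub_X, FiniteField.X_pow_card_sub_X_natDegree_eq F hq]
    rfl
  have hz : z ∈ (map (algebraMap F E) (X ^ Fintype.card F - X)).roots := by
    rw [mem_roots (Polynomial.map_ne_zero (FiniteField.X_pow_card_sub_X_ne_zero F hq))]
    simp [hz]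
  rw [hroots] at hz
  simpa using hz

theorem three_dvd_two_pow_add_one {n : ℕ} (hn : Odd n) : 3 ∣ 2 ^ n + 1 := by
  obtain ⟨k, rfl⟩ := hn
  rw [Nat.dvd_iff_mod_eq_zero, pow_succ, pow_mul, Nat.add_mod, Nat.mul_mod, Nat.pow_mod]
  norm_num

section QuadraticExtension

variable {n : ℕ} {F E : Type*} [Field F] [Fintype F] [Field E] [Fintype E] [Algebra F E]

theorem exists_add_inv_eq_algebraMap (hF : Fintype.card F = 2 ^ n)
    (hE : Fintype.card E = 2 ^ (2 * n)) (x : F) : ∃ u : E, u + u⁻¹ = algebraMap F E x := by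
  have := charP_of_card_eq_prime_pow (p := 2) hE
  obtain ⟨z, hz⟩ := FiniteField.exists_sq_add_self_eq hE
    (sum_range_two_mul_pow_two_pow_eq_zero (a := (algebraMap F E x)⁻¹) (n := n)
      (by rw [← map_inv₀, ← map_pow, ← hF, FiniteField.pow_card]))
  exact ⟨_, add_inv_eq_of_sq_add_self_eq_inv hz⟩

theorem sum_inv_pow_two_pow_eq_zero_or_exists_eq_add_inv (hn : Odd n)
    (hF : Fintype.card F = 2 ^ n) (hE : Fintype.card E = 2 ^ (2 * n)) {x : F} (hx : x ^ 3 + x ≠ 0) :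
    ∑ i ∈ Finset.range n, (x ^ 3 + x)⁻¹ ^ 2 ^ i = 0 ∨
      ∃ s : E, s ^ ((2 ^ n + 1) / 3) = 1 ∧ s ≠ 1 ∧ algebraMap F E (x ^ 3 + x) = s + s⁻¹ := by
  have := charP_of_card_eq_prime_pow (p := 2) hF
  have := charP_of_card_eq_prime_pow (p := 2) hE
  obtain ⟨u, hu⟩ := exists_add_inv_eq_algebraMap hF hE x
  have hu0 : u ≠ 0 := by
    rintro rfl
    have : x = 0 := (map_eq_zero_iff _ (algebraMap F E).injective).1 (by simpa using hu.symm)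
    exact hx (by rw [this]; ring)
  have hξ : algebraMap F E (x ^ 3 + x) = u ^ 3 + (u ^ 3)⁻¹ := by
    rw [map_add, map_pow, ← hu, add_inv_pow_three_add_add_inv]
  have hfrob : u ^ 2 ^ n + (u ^ 2 ^ n)⁻¹ = u + u⁻¹ := by
    rw [← inv_pow, ← add_pow_char_pow, hu, ← map_pow, ← hF, FiniteField.pow_card]
  rcases eq_or_eq_inv_of_add_inv_eq_add_inv hu0 (pow_ne_zero _ hu0) hfrob with hfix | hconj
  · left
    obtain ⟨w, rfl⟩ := exists_algebraMap_eq_of_pow_card_eq (F := F) (by rwa [hF])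
    have : x ^ 3 + x = w ^ 3 + (w ^ 3)⁻¹ := (algebraMap F E).injective (by rw [hξ]; simp)
    rw [this, inv_add_inv_eq_sq_add_self, sum_range_sq_add_self_pow_two_pow, ← hF,
      FiniteField.pow_card, CharTwo.add_self_eq_zero]
  · right
    refine ⟨u ^ 3, ?_, fun h => hx ?_, hξ⟩
    · rw [← pow_mul, Nat.mul_div_cancel' (three_dvd_two_pow_add_one hn), pow_succ, hconj,
        inv_mul_cancel₀ hu0]
    · apply (algebraMap F E).injective
      rw [hξ, h, inv_one, map_zero, CharTwo.add_self_eq_zero]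

theorem exists_cube_add_self_eq_of_sum_inv_pow_two_pow_eq_zero (hn : Odd n)
    (hF : Fintype.card F = 2 ^ n) {ξ : F} (hξ : ξ ≠ 0)
    (htr : ∑ i ∈ Finset.range n, ξ⁻¹ ^ 2 ^ i = 0) : ∃ x : F, x ^ 3 + x = ξ := by
  have := charP_of_card_eq_prime_pow (p := 2) hF
  obtain ⟨z, hz⟩ := FiniteField.exists_sq_add_self_eq hF htr
  have hW := add_inv_eq_of_sq_add_self_eq_inv hz
  have hW0 : z⁻¹ + 1 ≠ 0 := by
    intro h
    rw [h, inv_zero, add_zero] at hW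
    exact hξ hW.symm
  have hcop : (Fintype.card F - 1).Coprime 3 := by
    have := three_dvd_two_pow_add_one hn
    rw [hF, Nat.coprime_comm, Nat.Prime.coprime_iff_not_dvd Nat.prime_three]
    omega
  obtain ⟨w, hw⟩ := FiniteField.exists_pow_eq_of_coprime hcop hW0
  exact ⟨w + w⁻¹, by rw [add_inv_pow_three_add_add_inv, hw, hW]⟩

theorem exists_cube_add_self_eq_of_eq_add_inv (hn : Odd n) (hF : Fintype.card F = 2 ^ n)
    (hE : Fintype.card E = 2 ^ (2 * n)) {ξ : F} {s : E} (hs : s ^ ((2 ^ n + 1) / 3) = 1)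
    (hξ : algebraMap F E ξ = s + s⁻¹) : ∃ x : F, x ^ 3 + x = ξ := by
  have := charP_of_card_eq_prime_pow (p := 2) hE
  have h3 := Nat.mul_div_cancel' (three_dvd_two_pow_add_one hn)
  have hs0 : s ≠ 0 := by
    rintro rfl
    rw [zero_pow (by omega)] at hs
    exact zero_ne_one hs
  have hcard : 3 * ((2 ^ n + 1) / 3) ∣ Nat.card Eˣ := by
    rw [h3, Nat.card_units, Nat.card_eq_fintype_card, hE, pow_mul', ← one_pow 2, Nat.sq_sub_sq]
    exact dvd_mul_right _ _
  obtain ⟨U, hU, hU3⟩ := IsCyclic.exists_pow_eq_of_pow_eq_one hcard (s := Units.mk0 s hs0)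
    (Units.ext (by simpa using hs))
  have hu : (U : E) ^ 2 ^ n * U = 1 := by
    rw [← pow_succ, ← h3]
    simpa using congrArg Units.val hU
  have hconj : (U : E) ^ 2 ^ n = (U : E)⁻¹ := eq_inv_of_mul_eq_one_left hu
  obtain ⟨x, hx⟩ := exists_algebraMap_eq_of_pow_card_eq (F := F) (z := (U : E) + (U : E)⁻¹)
    (by rw [hF, add_pow_char_pow, hconj, inv_pow, hconj, inv_inv, add_comm])
  refine ⟨x, (algebraMap F E).injective ?_⟩
  have hu3 : (U : E) ^ 3 = s := by simpa using congrArg Units.val hU3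
  rw [map_add, map_pow, hx, add_inv_pow_three_add_add_inv, hξ, hu3]

end QuadraticExtension

theorem stmt_14 (n : ℕ) (hn : Odd n) (F : Type*) [Field F] [Fintype F]
    (hF : Fintype.card F = 2 ^ n) (E : Type*) [Field E] [Fintype E] [Algebra F E]
    (hE : Fintype.card E = 2 ^ (2 * n)) :
    Set.range (fun x : F => x ^ 3 + x) =
      {0} ∪ {ξ : F | ξ ≠ 0 ∧ ∑ i ∈ Finset.range n, ξ⁻¹ ^ 2 ^ i = 0}
        ∪ {ξ : F | ∃ s : E, s ^ ((2 ^ n + 1) / 3) = 1 ∧ s ≠ 1 ∧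
            algebraMap F E ξ = s + s⁻¹} ∧
    Disjoint ({0} : Set F) {ξ : F | ξ ≠ 0 ∧ ∑ i ∈ Finset.range n, ξ⁻¹ ^ 2 ^ i = 0} ∧
    Disjoint ({0} : Set F) {ξ : F | ∃ s : E, s ^ ((2 ^ n + 1) / 3) = 1 ∧ s ≠ 1 ∧
      algebraMap F E ξ = s + s⁻¹} ∧
    Disjoint {ξ : F | ξ ≠ 0 ∧ ∑ i ∈ Finset.range n, ξ⁻¹ ^ 2 ^ i = 0}
      {ξ : F | ∃ s : E, s ^ ((2 ^ n + 1) / 3) = 1 ∧ s ≠ 1 ∧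
        algebraMap F E ξ = s + s⁻¹} := by
  have := charP_of_card_eq_prime_pow (p := 2) hE
  have hcircle {s : E} (hs : s ^ ((2 ^ n + 1) / 3) = 1) : s ≠ 0 ∧ s ^ 2 ^ n = s⁻¹ := by
    have hs' : s ^ 2 ^ n * s = 1 := by
      rw [← pow_succ, ← Nat.mul_div_cancel' (three_dvd_two_pow_add_one hn), pow_mul', hs, one_pow]
    exact ⟨right_ne_zero_of_mul_eq_one hs', eq_inv_of_mul_eq_one_left hs'⟩
  refine ⟨Set.ext fun ξ => ⟨?_, ?_⟩, ?_, ?_, ?_⟩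
  · rintro ⟨x, rfl⟩
    by_cases hx : x ^ 3 + x = 0
    · exact .inl (.inl hx)
    · rcases sum_inv_pow_two_pow_eq_zero_or_exists_eq_add_inv hn hF hE hx with h | h
      exacts [.inl (.inr ⟨hx, h⟩), .inr h]
  · rintro ((rfl | ⟨hξ, htr⟩) | ⟨s, hs, -, hsξ⟩)
    · exact ⟨0, by ring⟩
    · exact exists_cube_add_self_eq_of_sum_inv_pow_two_pow_eq_zero hn hF hξ htr
    · exact exists_cube_add_self_eq_of_eq_add_inv hn hF hE hs hsξ
  · exact Set.disjoint_left.2 fun ξ hξ h => h.1 hξ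
  · refine Set.disjoint_left.2 fun ξ hξ ⟨s, hs, hs1, hsξ⟩ => ?_
    rw [Set.mem_singleton_iff.1 hξ, map_zero] at hsξ
    exact add_inv_ne_zero (hcircle hs).1 hs1 hsξ.symm
  · refine Set.disjoint_left.2 fun ξ ⟨_, htr⟩ ⟨s, hs, hs1, hsξ⟩ => ?_
    have : algebraMap F E (∑ i ∈ Finset.range n, ξ⁻¹ ^ 2 ^ i) = 1 := by
      simp only [map_sum, map_pow, map_inv₀, hsξ]
      exact sum_range_inv_add_inv_pow_two_pow_eq_one (hcircle hs).1 hs1 (hcircle hs).2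
    rw [htr, map_zero] at this
    exact zero_ne_one this
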